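/- arXiv:1912.10742 — 3 statements merged into one kernel-verified Lean document; each statement's English description precedes it below -/
import Mathlib

section
/- Let (X, d_f) and (X, d_{f̂}) denote the same set X equipped with two filter-based pseudometrics induced by continuous functions f, f̂ : X → Z into a metric space Z, via d_f(x,x') = inf over continuous paths γ from x to x' of diam_Z(f∘γ). If sup_{x∈X} d_Z(f(x), f̂(x)) ≤ ε, then for all x,x' ∈ X, |d_f(x,x') − d_{f̂}(x,x')| ≤ 2ε, and consequently the Gromov–Hausdorff distance between (X,d_f) and (X,d_{f̂}) is at most 2ε. -/
open Set Metric ENNReal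

/-- The filter-based pseudometric. -/
noncomputable def dFilter {X Z : Type*} [TopologicalSpace X] [PseudoMetricSpace Z]
    (f : X → Z) (x x' : X) : ℝ≥0∞ :=
  ⨅ γ : Path x x', EMetric.diam (f '' Set.range γ)

/-- A correspondence between two sets. -/
def IsCorrespondence {A B : Type*} (C : Set (A × B)) : Prop :=
  (∀ a, ∃ b, (a, b) ∈ C) ∧ (∀ b, ∃ a, (a, b) ∈ C)

/-- The distortion of a correspondence between two pseudometrics. -/
noncomputable def corrDistortion {A B : Type*} (dA : A → A → ℝ≥0∞) (dB : B → B → ℝ≥0∞)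
    (C : Set (A × B)) : ℝ≥0∞ :=
  ⨆ p ∈ C, ⨆ q ∈ C, max (dA p.1 q.1 - dB p.2 q.2) (dB p.2 q.2 - dA p.1 q.1)

/-- Gromov–Hausdorff distance via correspondences. -/
noncomputable def ghDist {A B : Type*} (dA : A → A → ℝ≥0∞) (dB : B → B → ℝ≥0∞) : ℝ≥0∞ :=
  (⨅ C : {C : Set (A × B) // IsCorrespondence C}, corrDistortion dA dB C.1) / 2

/-! Along any path the images under `f` and `f̂` are pointwise `ε`-close, so their diameters
differ by at most `2ε`; taking infima over paths gives the bound on `d_f - d_f̂`, and the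
identity correspondence then has distortion at most `2ε`. -/

theorem ediam_image_le_ediam_image_add {α Z : Type*} [PseudoEMetricSpace Z] {f g : α → Z}
    {δ : ℝ≥0∞} (s : Set α) (hfg : ∀ a, edist (f a) (g a) ≤ δ) :
    ediam (f '' s) ≤ ediam (g '' s) + 2 * δ := by
  refine ediam_image_le_iff.2 fun a ha b hb => ?_
  calc edist (f a) (f b)
      ≤ edist (f a) (g a) + edist (g a) (g b) + edist (g b) (f b) := edist_triangle4 _ _ _ _
    _ ≤ δ + ediam (g '' s) + δ := by
        gcongr
        · exact hfg a
        · exact edist_le_ediam_of_mem (mem_image_of_mem g ha) (mem_image_of_mem g hb)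
        · exact edist_comm (g b) (f b) ▸ hfg b
    _ = ediam (g '' s) + 2 * δ := by ring

theorem dFilter_le_dFilter_add {X Z : Type*} [TopologicalSpace X] [PseudoMetricSpace Z]
    {f g : X → Z} {δ : ℝ≥0∞} (hfg : ∀ x, edist (f x) (g x) ≤ δ) (x x' : X) :
    dFilter f x x' ≤ dFilter g x x' + 2 * δ := by
  rw [dFilter, dFilter, ENNReal.iInf_add]
  exact iInf_mono fun γ => ediam_image_le_ediam_image_add _ hfg

section GromovHausdorff

variable {A B : Type*} {dA : A → A → ℝ≥0∞} {dB : B → B → ℝ≥0∞}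

theorem ghDist_le_corrDistortion_div_two {C : Set (A × B)} (hC : IsCorrespondence C) :
    ghDist dA dB ≤ corrDistortion dA dB C / 2 :=
  ENNReal.div_le_div_right (iInf_le (fun C : {C // IsCorrespondence C} =>
    corrDistortion dA dB C.1) ⟨C, hC⟩) 2

theorem isCorrespondence_diagonal : IsCorrespondence (diagonal A) :=
  ⟨fun a => ⟨a, rfl⟩, fun b => ⟨b, rfl⟩⟩

theorem corrDistortion_diagonal_le {d d' : A → A → ℝ≥0∞} {c : ℝ≥0∞}
    (h : ∀ x y, d x y ≤ d' x y + c) (h' : ∀ x y, d' x y ≤ d x y + c) :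
    corrDistortion d d' (diagonal A) ≤ c := by
  refine iSup₂_le fun ⟨x, _⟩ hx => iSup₂_le fun ⟨y, _⟩ hy => ?_
  obtain rfl : x = _ := hx
  obtain rfl : y = _ := hy
  exact max_le (tsub_le_iff_left.2 (h x y)) (tsub_le_iff_left.2 (h' x y))

end GromovHausdorff

theorem dFilter_perturbation_general {X Z : Type*} [TopologicalSpace X] [MetricSpace Z]
    (f fhat : X → Z) (ε : ℝ) (hclose : ∀ x : X, dist (f x) (fhat x) ≤ ε) :
    (∀ x x' : X,
      dFilter f x x' ≤ dFilter fhat x x' + ENNReal.ofReal (2 * ε) ∧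
      dFilter fhat x x' ≤ dFilter f x x' + ENNReal.ofReal (2 * ε)) ∧
    ghDist (dFilter f) (dFilter fhat) ≤ ENNReal.ofReal (2 * ε) := by
  have hedist : ∀ x, edist (f x) (fhat x) ≤ ENNReal.ofReal ε := fun x =>
    edist_dist (f x) (fhat x) ▸ ENNReal.ofReal_le_ofReal (hclose x)
  have hedist' : ∀ x, edist (fhat x) (f x) ≤ ENNReal.ofReal ε := fun x =>
    edist_comm (f x) (fhat x) ▸ hedist x
  rw [ENNReal.ofReal_mul zero_le_two, ENNReal.ofReal_ofNat]
  have hbound := fun x x' =>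
    And.intro (dFilter_le_dFilter_add hedist x x') (dFilter_le_dFilter_add hedist' x x')
  refine ⟨hbound, ?_⟩
  calc ghDist (dFilter f) (dFilter fhat)
      ≤ corrDistortion (dFilter f) (dFilter fhat) (diagonal X) / 2 :=
        ghDist_le_corrDistortion_div_two isCorrespondence_diagonal
    _ ≤ 2 * ENNReal.ofReal ε / 2 := by
        gcongr
        exact corrDistortion_diagonal_le (fun x x' => (hbound x x').1) fun x x' => (hbound x x').2
    _ ≤ 2 * ENNReal.ofReal ε := ENNReal.half_le_self

/-- If `sup_x d_Z(f x, f̂ x) ≤ ε` then the filter-based pseudometrics of `f` and `f̂`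
differ by at most `2ε`, and hence the Gromov–Hausdorff distance between `(X, d_f)` and
`(X, d_f̂)` is at most `2ε`. -/
theorem dFilter_perturbation {X Z : Type*} [TopologicalSpace X] [MetricSpace Z]
    (f fhat : X → Z) (hf : Continuous f) (hfhat : Continuous fhat)
    (ε : ℝ) (hε : 0 ≤ ε) (hclose : ∀ x : X, dist (f x) (fhat x) ≤ ε) :
    (∀ x x' : X,
      dFilter f x x' ≤ dFilter fhat x x' + ENNReal.ofReal (2 * ε) ∧
      dFilter fhat x x' ≤ dFilter f x x' + ENNReal.ofReal (2 * ε)) ∧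
    ghDist (dFilter f) (dFilter fhat) ≤ ENNReal.ofReal (2 * ε) :=
  dFilter_perturbation_general f fhat ε hclose
end

section
/- Let Q be a probability measure on ℝ^p whose support satisfies Q(B(z,r)) ≥ min{1, a' r^β} for all z in the support and r > 0 (i.e., Q is (a',β)-standard). Let t = (t₁,…,t_k) ∈ (ℝ^p)^k, and let d_t(z) = min_j ‖z − t_j‖. Let Δ = sup{d_t(z) : z ∈ supp(Q)}. Then ∫ d_t² dQ ≥ (Δ²/4) · min{1, a' (Δ/2)^β}. -/
/-!
Since `d_t` is `1`-Lipschitz, every `z` in the support with `d_t(z) > Δ/2` has `d_t ≥ d_t(z) - Δ/2`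
on `B(z, Δ/2)`, a ball of mass at least `min{1, a' (Δ/2)^β}`; Markov's inequality gives
`∫ d_t² dQ ≥ (d_t(z) - Δ/2)² · min{1, a' (Δ/2)^β}`, and letting `d_t(z) → Δ` proves the bound.
-/

open Set Metric MeasureTheory

/-- The distance-to-`k`-points function `d_t(z) = min_j ‖z − t_j‖`. -/
noncomputable def dTuple {E : Type*} [PseudoMetricSpace E] {k : ℕ} (t : Fin k → E)
    (z : E) : ℝ :=
  ⨅ j, dist z (t j)

theorem dTuple_eq_infDist {E : Type*} [PseudoMetricSpace E] {k : ℕ} (t : Fin k → E) (z : E) :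
    dTuple t z = infDist z (range t) := by
  rw [infDist_eq_iInf, dTuple, iInf, iInf]
  congr 1
  ext
  simp

theorem lipschitzWith_dTuple {E : Type*} [PseudoMetricSpace E] {k : ℕ} (t : Fin k → E) :
    LipschitzWith 1 (dTuple t) := by
  simpa only [← dTuple_eq_infDist] using lipschitz_infDist_pt (range t)

theorem Real.nonempty_and_bddAbove_of_sSup_pos {A : Set ℝ} (h : 0 < sSup A) :
    A.Nonempty ∧ BddAbove A := by
  by_contra hA
  rw [Real.sSup_def, dif_neg hA] at h
  exact h.false

theorem Continuous.map_csSup_le_of_forall_le {α β : Type*} [ConditionallyCompleteLinearOrder α]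
    [TopologicalSpace α] [OrderTopology α] [TopologicalSpace β] [Preorder β]
    [OrderClosedTopology β] {A : Set α} (hne : A.Nonempty) (hbdd : BddAbove A) {g : α → β}
    (hg : Continuous g) {c : β} (h : ∀ x ∈ A, g x ≤ c) : g (sSup A) ≤ c :=
  closure_minimal h (isClosed_le hg continuous_const) (csSup_mem_closure hne hbdd)

theorem LipschitzWith.sq_sub_mul_measureReal_closedBall_le_integral_sq {E : Type*}
    [PseudoMetricSpace E] [MeasurableSpace E] {Q : Measure E} [IsFiniteMeasure Q] {f : E → ℝ}
    (hf : LipschitzWith 1 f) (hint : Integrable (fun z => f z ^ 2) Q) (z₀ : E) (r : ℝ) :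
    max (f z₀ - r) 0 ^ 2 * Q.real (closedBall z₀ r) ≤ ∫ z, f z ^ 2 ∂Q := by
  refine le_trans ?_ (mul_meas_ge_le_integral_of_nonneg (ae_of_all _ fun z => sq_nonneg _) hint
    (max (f z₀ - r) 0 ^ 2))
  refine mul_le_mul_of_nonneg_left (measureReal_mono fun z hz => ?_) (sq_nonneg _)
  have hlip := hf.le_add_mul z₀ z
  rw [NNReal.coe_one, one_mul, dist_comm] at hlip
  have hle : max (f z₀ - r) 0 ≤ |f z| :=
    max_le (by linarith [le_abs_self (f z), mem_closedBall.mp hz]) (abs_nonneg _)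
  exact (pow_le_pow_left₀ (le_max_right _ _) hle 2).trans_eq (sq_abs _)

theorem kmeans_cost_lower_bound_general {p k : ℕ}
    (Q : Measure (EuclideanSpace ℝ (Fin p))) [IsProbabilityMeasure Q]
    (S : Set (EuclideanSpace ℝ (Fin p))) (hS : Q Sᶜ = 0)
    (a' β : ℝ)
    (hstd : ∀ z ∈ S, ∀ r > (0 : ℝ),
      min 1 (a' * r ^ β) ≤ (Q (Metric.closedBall z r)).toReal)
    (t : Fin k → EuclideanSpace ℝ (Fin p))
    (Δ : ℝ) (hΔ : Δ = sSup {d | ∃ z ∈ S, d = dTuple t z}) :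
    Δ ^ 2 / 4 * min 1 (a' * (Δ / 2) ^ β) ≤ ∫ z, (dTuple t z) ^ 2 ∂Q := by
  have hd_nonneg (z) : 0 ≤ dTuple t z := dTuple_eq_infDist t z ▸ infDist_nonneg
  have hΔ_nonneg : 0 ≤ Δ := hΔ ▸ Real.sSup_nonneg (by rintro _ ⟨z, -, rfl⟩; exact hd_nonneg z)
  rcases hΔ_nonneg.eq_or_lt with rfl | hΔ_pos
  · simpa using integral_nonneg fun z => sq_nonneg (dTuple t z)
  obtain ⟨hne, hbdd⟩ := Real.nonempty_and_bddAbove_of_sSup_pos (hΔ ▸ hΔ_pos)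
  have hint : Integrable (fun z => dTuple t z ^ 2) Q := by
    refine .of_bound ((lipschitzWith_dTuple t).continuous.pow 2).aestronglyMeasurable (Δ ^ 2) ?_
    filter_upwards [mem_ae_iff.mpr hS] with z hz
    rw [Real.norm_eq_abs, abs_of_nonneg (sq_nonneg _)]
    exact pow_le_pow_left₀ (hd_nonneg z) (hΔ ▸ le_csSup hbdd ⟨z, hz, rfl⟩) 2
  have hpoint : ∀ x ∈ {d | ∃ z ∈ S, d = dTuple t z},
      max (x - Δ / 2) 0 ^ 2 * min 1 (a' * (Δ / 2) ^ β) ≤ ∫ z, dTuple t z ^ 2 ∂Q := by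
    rintro _ ⟨z, hz, rfl⟩
    calc _ ≤ max (dTuple t z - Δ / 2) 0 ^ 2 * Q.real (closedBall z (Δ / 2)) :=
          mul_le_mul_of_nonneg_left (hstd z hz _ (half_pos hΔ_pos)) (sq_nonneg _)
      _ ≤ _ := (lipschitzWith_dTuple t).sq_sub_mul_measureReal_closedBall_le_integral_sq hint z _
  have hsup := Continuous.map_csSup_le_of_forall_le hne hbdd (by fun_prop) hpoint
  rw [← hΔ, max_eq_left (by linarith)] at hsup
  linarith

/-- If `Q` is `(a',β)`-standard on its support `S` and `Δ = sup_{z ∈ S} d_t(z)`, then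
`∫ d_t² dQ ≥ (Δ²/4) · min{1, a' (Δ/2)^β}`. -/
theorem kmeans_cost_lower_bound {p k : ℕ} (hk : 0 < k)
    (Q : Measure (EuclideanSpace ℝ (Fin p))) [IsProbabilityMeasure Q]
    (S : Set (EuclideanSpace ℝ (Fin p))) (hS : Q Sᶜ = 0)
    (a' β : ℝ) (ha : 0 < a') (hβ : 0 < β)
    (hstd : ∀ z ∈ S, ∀ r > (0 : ℝ),
      min 1 (a' * r ^ β) ≤ (Q (Metric.closedBall z r)).toReal)
    (t : Fin k → EuclideanSpace ℝ (Fin p))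
    (Δ : ℝ) (hΔ : Δ = sSup {d | ∃ z ∈ S, d = dTuple t z}) :
    Δ ^ 2 / 4 * min 1 (a' * (Δ / 2) ^ β) ≤ ∫ z, (dTuple t z) ^ 2 ∂Q :=
  kmeans_cost_lower_bound_general Q S hS a' β hstd t Δ hΔ
end

section
/- Let X_n be a finite subset of a geodesic metric space X with Hausdorff distance d_H(X_n, X) ≤ h (in the geodesic metric), and suppose γ : [0,1] → X is a continuous path. For each t, pick x_t ∈ X_n with d_g(γ(t), x_t) ≤ h. Then any two points x_{t_i}, x_{t_{i+1}} chosen at consecutive 'switch' parameters of the (finitely-valued) map t ↦ x_t satisfy d_g(x_{t_i}, x_{t_{i+1}}) ≤ 6h. In particular, the points of X_n visited along γ form a path in the 6h-neighborhood graph on X_n. -/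
open Set Metric

/-!
On `[t, t']` the parameters where `γ` is within `h` of `p` and those where it is within `h`
of `q` form two closed sets covering the interval, each nonempty. By connectedness they meet:
some `γ s` is within `h` of both `p` and `q`, so `d(p, q) ≤ 2h ≤ 6h`.
-/

theorem IsPreconnected.exists_mem_inter_of_image_subset_union {α β : Type*}
    [TopologicalSpace α] [TopologicalSpace β] {S : Set α} {f : α → β} {A B : Set β}
    (hS : IsPreconnected S) (hf : ContinuousOn f S) (hA : IsClosed A) (hB : IsClosed B)
    (hcover : f '' S ⊆ A ∪ B) {a b : α} (ha : a ∈ S) (hfa : f a ∈ A) (hb : b ∈ S)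
    (hfb : f b ∈ B) : ∃ c ∈ S, f c ∈ A ∧ f c ∈ B := by
  obtain ⟨_, ⟨c, hc, rfl⟩, hcA, hcB⟩ := isPreconnected_closed_iff.mp (hS.image f hf) A B hA hB
    hcover ⟨f a, mem_image_of_mem f ha, hfa⟩ ⟨f b, mem_image_of_mem f hb, hfb⟩
  exact ⟨c, hc, hcA, hcB⟩

theorem consecutive_sample_points_close_general {X : Type*} [MetricSpace X]
    (h : ℝ)
    (γ : ℝ → X) (t t' : ℝ) (ht : t ≤ t')
    (hγ : ContinuousOn γ (Set.Icc t t'))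
    (p q : X)
    (hswitch : ∀ s ∈ Set.Icc t t', dist (γ s) p ≤ h ∨ dist (γ s) q ≤ h)
    (hp : dist (γ t) p ≤ h) (hq : dist (γ t') q ≤ h) :
    dist p q ≤ 6 * h := by
  have hcover : γ '' Icc t t' ⊆ closedBall p h ∪ closedBall q h := by
    rintro _ ⟨s, hs, rfl⟩
    exact hswitch s hs
  obtain ⟨s, -, hsp, hsq⟩ := isPreconnected_Icc.exists_mem_inter_of_image_subset_union hγ
    isClosed_closedBall isClosed_closedBall hcover (left_mem_Icc.mpr ht) hp
    (right_mem_Icc.mpr ht) hq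
  have h0 : 0 ≤ h := dist_nonneg.trans hp
  calc dist p q ≤ dist (γ s) p + dist (γ s) q := dist_triangle_left p q (γ s)
    _ ≤ h + h := add_le_add hsp hsq
    _ ≤ 6 * h := by linarith

/-- Let `X_n` be a finite `h`-dense subset of a geodesic metric space, `γ` a continuous
path, and `p, q ∈ X_n` the sample points assigned at two consecutive switch parameters
`t ≤ t'` (so every point of `γ` on `[t, t']` is within `h` of `p` or of `q`, with
`γ t` within `h` of `p` and `γ t'` within `h` of `q`). Then `d(p, q) ≤ 6h`, i.e. `p` and
`q` are joined in the `6h`-neighborhood graph on `X_n`. -/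
theorem consecutive_sample_points_close {X : Type*} [MetricSpace X]
    (h : ℝ) (h0 : 0 ≤ h)
    (Xn : Set X) (hXnfin : Xn.Finite)
    (hdense : ∀ x : X, ∃ p ∈ Xn, dist x p ≤ h)
    (γ : ℝ → X) (t t' : ℝ) (ht : t ≤ t')
    (hγ : ContinuousOn γ (Set.Icc t t'))
    (p q : X) (hpXn : p ∈ Xn) (hqXn : q ∈ Xn)
    (hswitch : ∀ s ∈ Set.Icc t t', dist (γ s) p ≤ h ∨ dist (γ s) q ≤ h)
    (hp : dist (γ t) p ≤ h) (hq : dist (γ t') q ≤ h) :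
    dist p q ≤ 6 * h :=
  consecutive_sample_points_close_general h γ t t' ht hγ p q hswitch hp hq
end
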